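/- arXiv:1211.6898 — 2 statements merged into one kernel-verified Lean document; each statement's English description precedes it below -/
import Mathlib

section
/- Special case m = k of the AVI non-stationary bound: ‖v_* − v_{π_{k,k}}‖_∞ ≤ 2( γ/(1−γ) − γ^k/(1−γ^k) ) ε + (2γ^k/(1−γ^k)) ‖v_* − v_0‖_∞; consequently, lim sup_{k→∞} ‖v_* − v_{π_{k,k}}‖_∞ ≤ 2γ/(1−γ) · ε. -/
open Finset Filter

variable {S A : Type*} [Fintype S] [Nonempty S] [DecidableEq S] [Fintype A] [Nonempty A]

/-- `P s a s'` is the probability of moving to `s'` when taking action `a` in state `s`. -/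
def IsStochastic (P : S → A → S → ℝ) : Prop :=
  (∀ s a s', 0 ≤ P s a s') ∧ ∀ s a, ∑ s', P s a s' = 1

/-- Bellman operator `T_π` of a stationary deterministic policy `π`. -/
noncomputable def Tpol (P : S → A → S → ℝ) (r : S → A → ℝ) (γ : ℝ)
    (π : S → A) (v : S → ℝ) : S → ℝ :=
  fun s => r s (π s) + γ * ∑ s', P s (π s) s' * v s'

/-- Bellman optimality operator `T`. -/
noncomputable def Topt (P : S → A → S → ℝ) (r : S → A → ℝ) (γ : ℝ) (v : S → ℝ) : S → ℝ :=
  fun s => univ.sup' univ_nonempty (fun a => r s a + γ * ∑ s', P s a s' * v s')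

/-- Application of the transition matrix `P_π` to a value function. -/
noncomputable def Pap (P : S → A → S → ℝ) (π : S → A) (v : S → ℝ) : S → ℝ :=
  fun s => ∑ s', P s (π s) s' * v s'

/-- `Tcomp P r γ πs k m = T_{π_k} T_{π_{k-1}} ⋯ T_{π_{k-m+1}}`. -/
noncomputable def Tcomp (P : S → A → S → ℝ) (r : S → A → ℝ) (γ : ℝ)
    (πs : ℕ → S → A) : ℕ → ℕ → (S → ℝ) → (S → ℝ)
  | _, 0, v => v
  | k, m+1, v => Tpol P r γ (πs k) (Tcomp P r γ πs (k-1) m v)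

/-- `Gap P γ πs k m = (γP_{π_k})(γP_{π_{k-1}})⋯(γP_{π_{k-m+1}})` applied to a value function. -/
noncomputable def Gap (P : S → A → S → ℝ) (γ : ℝ)
    (πs : ℕ → S → A) : ℕ → ℕ → (S → ℝ) → (S → ℝ)
  | _, 0, v => v
  | k, m+1, v => γ • Pap P (πs k) (Gap P γ πs (k-1) m v)

open Topology

/-!
Write `u_j = T_{π_j} ⋯ T_{π_1} v_*`. Since `π_{j+1}` is greedy for `v_j`, both `v_* - v_j` and
`v_j - u_j` obey `‖x_{j+1}‖ ≤ γ ‖x_j‖ + ε`, so both are at most `γ^j ‖v_* - v_0‖ + ε ∑_{i<j} γ^i`.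
Splitting `v_* - u_k = (T v_* - T v_{k-1}) + (T_{π_k} v_{k-1} - T_{π_k} u_{k-1})` at step `k - 1`
keeps the last error `ε_k` out of the bound, which gives `‖v_* - u_k‖ ≤ 2γ (γ^{k-1} ‖v_* - v_0‖ + ε ∑_{i<k-1} γ^i)`. The loop policy's value is
the fixed point of the `γ^k`-contraction `T_{π_k} ⋯ T_{π_1}`, hence lies within
`‖v_* - u_k‖ / (1 - γ^k)` of `v_*`.
-/

lemma le_pow_mul_add_mul_geom_sum {x : ℕ → ℝ} {γ ε : ℝ} (hγ : 0 ≤ γ)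
    (h : ∀ j, x (j + 1) ≤ γ * x j + ε) (j : ℕ) :
    x j ≤ γ ^ j * x 0 + ε * ∑ i ∈ range j, γ ^ i := by
  induction j with
  | zero => simp
  | succ j ih =>
    calc x (j + 1) ≤ γ * x j + ε := h j
      _ ≤ γ * (γ ^ j * x 0 + ε * ∑ i ∈ range j, γ ^ i) + ε := by gcongr
      _ = γ ^ (j + 1) * x 0 + ε * ∑ i ∈ range (j + 1), γ ^ i := by
        rw [geom_sum_succ]; ring

section PolicyOperators

omit [Nonempty S] [DecidableEq S] [Fintype A] [Nonempty A]

variable {P : S → A → S → ℝ} {r : S → A → ℝ} {γ : ℝ}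

lemma IsStochastic.norm_Pap_le (hP : IsStochastic P) (π : S → A) (u : S → ℝ) :
    ‖Pap P π u‖ ≤ ‖u‖ := by
  refine (pi_norm_le_iff_of_nonneg (norm_nonneg u)).2 fun s => ?_
  calc ‖Pap P π u s‖ ≤ ∑ s', ‖P s (π s) s' * u s'‖ := norm_sum_le _ _
    _ ≤ ∑ s', P s (π s) s' * ‖u‖ := by
      gcongr with s'
      rw [norm_mul, Real.norm_of_nonneg (hP.1 _ _ _)]
      exact mul_le_mul_of_nonneg_left (norm_le_pi_norm u s') (hP.1 _ _ _)
    _ = ‖u‖ := by rw [← sum_mul, hP.2, one_mul]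

lemma Tpol_sub_Tpol (π : S → A) (u w : S → ℝ) :
    Tpol P r γ π u - Tpol P r γ π w = γ • Pap P π (u - w) := by
  funext s
  simp only [Tpol, Pap, Pi.sub_apply, Pi.smul_apply, smul_eq_mul, mul_sub, sum_sub_distrib]
  ring

lemma norm_Tpol_sub_Tpol_le (hP : IsStochastic P) (hγ : 0 ≤ γ) (π : S → A) (u w : S → ℝ) :
    ‖Tpol P r γ π u - Tpol P r γ π w‖ ≤ γ * ‖u - w‖ := by
  rw [Tpol_sub_Tpol, norm_smul, Real.norm_of_nonneg hγ]
  exact mul_le_mul_of_nonneg_left (hP.norm_Pap_le π _) hγ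

lemma lipschitzWith_Tpol (hP : IsStochastic P) (hγ : 0 ≤ γ) (π : S → A) :
    LipschitzWith γ.toNNReal (Tpol P r γ π) :=
  LipschitzWith.of_dist_le' fun u w => by
    simpa only [dist_eq_norm] using norm_Tpol_sub_Tpol_le hP hγ π u w

lemma Tcomp_succ_succ (πs : ℕ → S → A) (k m : ℕ) (u : S → ℝ) :
    Tcomp P r γ πs (k + 1) (m + 1) u = Tpol P r γ (πs (k + 1)) (Tcomp P r γ πs k m u) :=
  rfl

lemma lipschitzWith_Tcomp (hP : IsStochastic P) (hγ : 0 ≤ γ) (πs : ℕ → S → A) (k m : ℕ) :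
    LipschitzWith (γ.toNNReal ^ m) (Tcomp P r γ πs k m) := by
  induction m generalizing k with
  | zero => rw [pow_zero]; exact LipschitzWith.id
  | succ m ih => rw [pow_succ']; exact (lipschitzWith_Tpol hP hγ (πs k)).comp (ih (k - 1))

lemma norm_sub_le_of_Tcomp_fixed (hP : IsStochastic P) (hγ : 0 ≤ γ) (hγ1 : γ < 1)
    {πs : ℕ → S → A} {k m : ℕ} (hm : m ≠ 0) {w : S → ℝ} (hw : Tcomp P r γ πs k m w = w)
    (u : S → ℝ) : ‖u - w‖ ≤ ‖u - Tcomp P r γ πs k m u‖ / (1 - γ ^ m) := by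
  have hK : ContractingWith (γ.toNNReal ^ m) (Tcomp P r γ πs k m) :=
    ⟨pow_lt_one₀ zero_le (Real.toNNReal_lt_one.2 hγ1) hm, lipschitzWith_Tcomp hP hγ πs k m⟩
  simpa [dist_eq_norm, Real.coe_toNNReal γ hγ] using hK.dist_le_of_fixedPoint u hw

end PolicyOperators

section OptimalityOperator

omit [Nonempty S] [DecidableEq S]

variable {P : S → A → S → ℝ} {r : S → A → ℝ} {γ : ℝ}

lemma Tpol_le_Topt (π : S → A) (u : S → ℝ) (s : S) : Tpol P r γ π u s ≤ Topt P r γ u s :=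
  le_sup' (fun a => r s a + γ * ∑ s', P s a s' * u s') (mem_univ (π s))

lemma Topt_le_Topt_add (hP : IsStochastic P) (hγ : 0 ≤ γ) (u w : S → ℝ) (s : S) :
    Topt P r γ u s ≤ Topt P r γ w s + γ * ‖u - w‖ := by
  refine sup'_le _ _ fun a _ => ?_
  have hdiff :=
    (norm_le_pi_norm _ s).trans (norm_Tpol_sub_Tpol_le (r := r) hP hγ (fun _ => a) u w)
  rw [Pi.sub_apply, Real.norm_eq_abs, abs_sub_le_iff] at hdiff
  show Tpol P r γ (fun _ => a) u s ≤ _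
  linarith [Tpol_le_Topt (P := P) (r := r) (γ := γ) (fun _ => a) w s]

lemma norm_Topt_sub_Topt_le (hP : IsStochastic P) (hγ : 0 ≤ γ) (u w : S → ℝ) :
    ‖Topt P r γ u - Topt P r γ w‖ ≤ γ * ‖u - w‖ := by
  refine (pi_norm_le_iff_of_nonneg (mul_nonneg hγ (norm_nonneg _))).2 fun s => ?_
  have hle := Topt_le_Topt_add (r := r) hP hγ u w s
  have hge := Topt_le_Topt_add (r := r) hP hγ w u s
  rw [norm_sub_rev] at hge
  rw [Pi.sub_apply, Real.norm_eq_abs, abs_sub_le_iff]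
  exact ⟨by linarith, by linarith⟩

end OptimalityOperator

section ApproximateValueIteration

omit [Nonempty S] [DecidableEq S]

variable {P : S → A → S → ℝ} {r : S → A → ℝ} {γ : ℝ} {πs : ℕ → S → A}
  {v εf : ℕ → S → ℝ} {ε : ℝ} {vstar : S → ℝ}

lemma norm_vstar_sub_iterate_le (hP : IsStochastic P) (hγ : 0 ≤ γ)
    (hAVI : ∀ k : ℕ, v (k + 1) = Topt P r γ (v k) + εf (k + 1))
    (herr : ∀ k : ℕ, 1 ≤ k → ‖εf k‖ ≤ ε) (hstar : Topt P r γ vstar = vstar) (j : ℕ) :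
    ‖vstar - v j‖ ≤ γ ^ j * ‖vstar - v 0‖ + ε * ∑ i ∈ range j, γ ^ i := by
  refine le_pow_mul_add_mul_geom_sum (x := fun j => ‖vstar - v j‖) hγ (fun j => ?_) j
  calc ‖vstar - v (j + 1)‖ = ‖(Topt P r γ vstar - Topt P r γ (v j)) - εf (j + 1)‖ := by
        rw [hAVI, hstar, sub_sub]
    _ ≤ ‖Topt P r γ vstar - Topt P r γ (v j)‖ + ‖εf (j + 1)‖ := norm_sub_le _ _
    _ ≤ γ * ‖vstar - v j‖ + ε :=
      add_le_add (norm_Topt_sub_Topt_le hP hγ _ _) (herr _ (Nat.le_add_left 1 j))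

lemma norm_iterate_sub_Tcomp_le (hP : IsStochastic P) (hγ : 0 ≤ γ)
    (hAVI : ∀ k : ℕ, v (k + 1) = Topt P r γ (v k) + εf (k + 1))
    (herr : ∀ k : ℕ, 1 ≤ k → ‖εf k‖ ≤ ε)
    (hgreedy : ∀ i : ℕ, Tpol P r γ (πs (i + 1)) (v i) = Topt P r γ (v i)) (j : ℕ) :
    ‖v j - Tcomp P r γ πs j j vstar‖ ≤ γ ^ j * ‖vstar - v 0‖ + ε * ∑ i ∈ range j, γ ^ i := by
  rw [norm_sub_rev vstar]
  refine le_pow_mul_add_mul_geom_sum (x := fun j => ‖v j - Tcomp P r γ πs j j vstar‖) hγ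
    (fun j => ?_) j
  calc ‖v (j + 1) - Tcomp P r γ πs (j + 1) (j + 1) vstar‖
      = ‖(Tpol P r γ (πs (j + 1)) (v j) - Tpol P r γ (πs (j + 1)) (Tcomp P r γ πs j j vstar))
          + εf (j + 1)‖ := by
        rw [hAVI, ← hgreedy, Tcomp_succ_succ, sub_add_eq_add_sub, add_sub_assoc]
    _ ≤ _ := norm_add_le _ _
    _ ≤ γ * ‖v j - Tcomp P r γ πs j j vstar‖ + ε :=
      add_le_add (norm_Tpol_sub_Tpol_le hP hγ _ _ _) (herr _ (Nat.le_add_left 1 j))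

lemma norm_vstar_sub_Tcomp_le (hP : IsStochastic P) (hγ : 0 ≤ γ)
    (hAVI : ∀ k : ℕ, v (k + 1) = Topt P r γ (v k) + εf (k + 1))
    (herr : ∀ k : ℕ, 1 ≤ k → ‖εf k‖ ≤ ε)
    (hgreedy : ∀ i : ℕ, Tpol P r γ (πs (i + 1)) (v i) = Topt P r γ (v i))
    (hstar : Topt P r γ vstar = vstar) (n : ℕ) :
    ‖vstar - Tcomp P r γ πs (n + 1) (n + 1) vstar‖
      ≤ 2 * γ * (γ ^ n * ‖vstar - v 0‖ + ε * ∑ i ∈ range n, γ ^ i) := by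
  set B := γ ^ n * ‖vstar - v 0‖ + ε * ∑ i ∈ range n, γ ^ i
  calc ‖vstar - Tcomp P r γ πs (n + 1) (n + 1) vstar‖
      = ‖(Topt P r γ vstar - Topt P r γ (v n)) + (Tpol P r γ (πs (n + 1)) (v n)
          - Tpol P r γ (πs (n + 1)) (Tcomp P r γ πs n n vstar))‖ := by
        rw [hstar, ← hgreedy, sub_add_sub_cancel, Tcomp_succ_succ]
    _ ≤ _ := norm_add_le _ _
    _ ≤ γ * ‖vstar - v n‖ + γ * ‖v n - Tcomp P r γ πs n n vstar‖ :=
      add_le_add (norm_Topt_sub_Topt_le hP hγ _ _) (norm_Tpol_sub_Tpol_le hP hγ _ _ _)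
    _ ≤ γ * B + γ * B := by
      gcongr
      · exact norm_vstar_sub_iterate_le hP hγ hAVI herr hstar n
      · exact norm_iterate_sub_Tcomp_le hP hγ hAVI herr hgreedy n
    _ = 2 * γ * B := by ring

lemma norm_vstar_sub_le_of_Tcomp_fixed (hP : IsStochastic P) (hγ : 0 ≤ γ) (hγ1 : γ < 1)
    (hAVI : ∀ k : ℕ, v (k + 1) = Topt P r γ (v k) + εf (k + 1))
    (herr : ∀ k : ℕ, 1 ≤ k → ‖εf k‖ ≤ ε)
    (hgreedy : ∀ i : ℕ, Tpol P r γ (πs (i + 1)) (v i) = Topt P r γ (v i))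
    (hstar : Topt P r γ vstar = vstar) {k : ℕ} (hk : 1 ≤ k) {w : S → ℝ}
    (hw : Tcomp P r γ πs k k w = w) :
    ‖vstar - w‖ ≤ 2 * (γ / (1 - γ) - γ ^ k / (1 - γ ^ k)) * ε
      + 2 * γ ^ k / (1 - γ ^ k) * ‖vstar - v 0‖ := by
  obtain ⟨n, rfl⟩ := Nat.exists_eq_add_of_le' hk
  have hγk : 0 < 1 - γ ^ (n + 1) := sub_pos.2 (pow_lt_one₀ hγ hγ1 n.succ_ne_zero)
  calc ‖vstar - w‖ ≤ ‖vstar - Tcomp P r γ πs (n + 1) (n + 1) vstar‖ / (1 - γ ^ (n + 1)) :=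
        norm_sub_le_of_Tcomp_fixed hP hγ hγ1 n.succ_ne_zero hw vstar
    _ ≤ 2 * γ * (γ ^ n * ‖vstar - v 0‖ + ε * ∑ i ∈ range n, γ ^ i) / (1 - γ ^ (n + 1)) := by
        gcongr; exact norm_vstar_sub_Tcomp_le hP hγ hAVI herr hgreedy hstar n
    _ = _ := by
        rw [geom_sum_eq hγ1.ne]
        field_simp [sub_ne_zero.2 hγ1.ne, (sub_pos.2 hγ1).ne', hγk.ne']
        ring

end ApproximateValueIteration

lemma tendsto_loop_policy_bound {γ : ℝ} (hγ : 0 ≤ γ) (hγ1 : γ < 1) (ε D : ℝ) :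
    Tendsto (fun k : ℕ => 2 * (γ / (1 - γ) - γ ^ k / (1 - γ ^ k)) * ε
      + 2 * γ ^ k / (1 - γ ^ k) * D) atTop (𝓝 (2 * γ / (1 - γ) * ε)) := by
  have hcont : ContinuousAt
      (fun t : ℝ => 2 * (γ / (1 - γ) - t / (1 - t)) * ε + 2 * t / (1 - t) * D) 0 := by
    fun_prop (disch := norm_num)
  convert hcont.tendsto.comp (tendsto_pow_atTop_nhds_zero_of_lt_one hγ hγ1) using 2
  norm_num
  ring

theorem avi_nonstationary_bound_m_eq_k_general (P : S → A → S → ℝ) (r : S → A → ℝ) (γ : ℝ)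
    (hP : IsStochastic P) (hγ0 : 0 < γ) (hγ1 : γ < 1)
    (v : ℕ → S → ℝ) (εf : ℕ → S → ℝ) (ε : ℝ) (πs : ℕ → S → A)
    (hAVI : ∀ k : ℕ, v (k+1) = Topt P r γ (v k) + εf (k+1))
    (herr : ∀ k : ℕ, 1 ≤ k → ‖εf k‖ ≤ ε)
    (hgreedy : ∀ i : ℕ, Tpol P r γ (πs (i+1)) (v i) = Topt P r γ (v i))
    (vstar : S → ℝ) (hstar : Topt P r γ vstar = vstar)
    (vkk : ℕ → S → ℝ) (hfix : ∀ k : ℕ, 1 ≤ k → Tcomp P r γ πs k k (vkk k) = vkk k) :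
    (∀ k : ℕ, 1 ≤ k →
      ‖vstar - vkk k‖ ≤ 2 * (γ / (1 - γ) - γ ^ k / (1 - γ ^ k)) * ε
        + 2 * γ ^ k / (1 - γ ^ k) * ‖vstar - v 0‖) ∧
    Filter.limsup (fun k => ‖vstar - vkk k‖) atTop ≤ 2 * γ / (1 - γ) * ε := by
  have bound : ∀ k : ℕ, 1 ≤ k → ‖vstar - vkk k‖
      ≤ 2 * (γ / (1 - γ) - γ ^ k / (1 - γ ^ k)) * ε
        + 2 * γ ^ k / (1 - γ ^ k) * ‖vstar - v 0‖ := fun k hk =>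
    norm_vstar_sub_le_of_Tcomp_fixed hP hγ0.le hγ1 hAVI herr hgreedy hstar hk (hfix k hk)
  have hlim := tendsto_loop_policy_bound hγ0.le hγ1 ε ‖vstar - v 0‖
  refine ⟨bound, ?_⟩
  calc limsup (fun k => ‖vstar - vkk k‖) atTop
      ≤ limsup (fun k : ℕ => 2 * (γ / (1 - γ) - γ ^ k / (1 - γ ^ k)) * ε
          + 2 * γ ^ k / (1 - γ ^ k) * ‖vstar - v 0‖) atTop :=
        limsup_le_limsup (eventually_atTop.2 ⟨1, bound⟩)
          (isCoboundedUnder_le_of_le atTop fun _ => norm_nonneg _) hlim.isBoundedUnder_le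
    _ = 2 * γ / (1 - γ) * ε := hlim.limsup_eq

/-- Special case `m = k` of the AVI non-stationary bound, and the resulting asymptotic
`limsup` bound `2γ/(1−γ) ε`. -/
theorem avi_nonstationary_bound_m_eq_k (P : S → A → S → ℝ) (r : S → A → ℝ) (γ : ℝ)
    (hP : IsStochastic P) (hγ0 : 0 < γ) (hγ1 : γ < 1)
    (v : ℕ → S → ℝ) (εf : ℕ → S → ℝ) (ε : ℝ) (hε : 0 ≤ ε) (πs : ℕ → S → A)
    (hAVI : ∀ k : ℕ, v (k+1) = Topt P r γ (v k) + εf (k+1))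
    (herr : ∀ k : ℕ, 1 ≤ k → ‖εf k‖ ≤ ε)
    (hgreedy : ∀ i : ℕ, Tpol P r γ (πs (i+1)) (v i) = Topt P r γ (v i))
    (vstar : S → ℝ) (hstar : Topt P r γ vstar = vstar)
    (vkk : ℕ → S → ℝ) (hfix : ∀ k : ℕ, 1 ≤ k → Tcomp P r γ πs k k (vkk k) = vkk k) :
    (∀ k : ℕ, 1 ≤ k →
      ‖vstar - vkk k‖ ≤ 2 * (γ / (1 - γ) - γ ^ k / (1 - γ ^ k)) * ε
        + 2 * γ ^ k / (1 - γ ^ k) * ‖vstar - v 0‖) ∧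
    Filter.limsup (fun k => ‖vstar - vkk k‖) atTop ≤ 2 * γ / (1 - γ) * ε :=
  avi_nonstationary_bound_m_eq_k_general P r γ hP hγ0 hγ1 v εf ε πs hAVI herr hgreedy vstar hstar
    vkk hfix
end

section
/- One-step error propagation for API with growing period: if π_{k+1} is greedy w.r.t. v_k = v_{π_{k,k}} + ε_k with ‖ε_k‖_∞ ≤ ε, then ‖v_* − v_{π_{k+1,k+1}}‖_∞ ≤ γ ‖v_* − v_{π_{k,k}}‖_∞ + 2γε + 2γ^{k+1} V_max. -/
/-! Both `v_{k,k}` and `v_{k+1,k+1}` are fixed points of a composition of policy Bellman operators: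
`v_{k+1,k+1} = T_{π_{k+1}} u` with `u = T_{π_k} ⋯ T_{π_1} v_{k+1,k+1}`, while
`v_{k,k} = T_{π_k} ⋯ T_{π_1} v_{k,k}`, so `‖u - v_{k,k}‖ ≤ γ^k ‖v_{k+1,k+1} - v_{k,k}‖ ≤ 2 γ^k V_max`.
Writing `w = v_{k,k} + ε_k`, greediness gives
`v_* - v_{k+1,k+1} = (T v_* - T w) + (T_{π_{k+1}} w - T_{π_{k+1}} u)`,
and both operators are `γ`-contractions in the sup norm. -/

open Finset Filter

variable {S A : Type*} [Fintype S] [Nonempty S] [DecidableEq S] [Fintype A] [Nonempty A]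

/-- The action value `Q_v(s, a)`; `Tpol` and `Topt` unfold to it definitionally. -/
noncomputable def qValue (P : S → A → S → ℝ) (r : S → A → ℝ) (γ : ℝ)
    (v : S → ℝ) (s : S) (a : A) : ℝ :=
  r s a + γ * ∑ s', P s a s' * v s'

theorem Finset.abs_sup'_sub_sup'_le {ι : Type*} {s : Finset ι} (H : s.Nonempty) {f g : ι → ℝ}
    {c : ℝ} (h : ∀ i ∈ s, |f i - g i| ≤ c) : |s.sup' H f - s.sup' H g| ≤ c := by
  rw [abs_sub_le_iff]
  constructor <;> rw [sub_le_iff_le_add] <;> refine Finset.sup'_le H _ fun i hi => ?_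
  · linarith [(abs_sub_le_iff.mp (h i hi)).1, s.le_sup' g hi]
  · linarith [(abs_sub_le_iff.mp (h i hi)).2, s.le_sup' f hi]

section Contraction

omit [Nonempty S] [DecidableEq S] [Fintype A] [Nonempty A]

variable {P : S → A → S → ℝ} {r : S → A → ℝ} {γ : ℝ}

theorem IsStochastic.abs_sum_mul_le (hP : IsStochastic P) (s : S) (a : A) (u : S → ℝ) :
    |∑ s', P s a s' * u s'| ≤ ‖u‖ :=
  calc |∑ s', P s a s' * u s'|
      ≤ ∑ s', |P s a s' * u s'| := Finset.abs_sum_le_sum_abs _ _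
    _ ≤ ∑ s', P s a s' * ‖u‖ := by
        gcongr with s'
        rw [abs_mul, abs_of_nonneg (hP.1 s a s')]
        gcongr
        · exact hP.1 s a s'
        · exact norm_le_pi_norm u s'
    _ = ‖u‖ := by rw [← Finset.sum_mul, hP.2 s a, one_mul]

theorem abs_qValue_sub_le (hP : IsStochastic P) (hγ : 0 ≤ γ) (v w : S → ℝ) (s : S) (a : A) :
    |qValue P r γ v s a - qValue P r γ w s a| ≤ γ * ‖v - w‖ := by
  have hsub : qValue P r γ v s a - qValue P r γ w s a = γ * ∑ s', P s a s' * (v - w) s' := by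
    simp only [qValue, Pi.sub_apply, mul_sub, Finset.sum_sub_distrib]
    ring
  rw [hsub, abs_mul, abs_of_nonneg hγ]
  exact mul_le_mul_of_nonneg_left (hP.abs_sum_mul_le s a _) hγ

theorem norm_Tpol_sub_le (hP : IsStochastic P) (hγ : 0 ≤ γ) (π : S → A) (v w : S → ℝ) :
    ‖Tpol P r γ π v - Tpol P r γ π w‖ ≤ γ * ‖v - w‖ :=
  (pi_norm_le_iff_of_nonneg (mul_nonneg hγ (norm_nonneg _))).2 fun s =>
    abs_qValue_sub_le hP hγ v w s (π s)

variable [Fintype A] [Nonempty A] in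
theorem norm_Topt_sub_le (hP : IsStochastic P) (hγ : 0 ≤ γ) (v w : S → ℝ) :
    ‖Topt P r γ v - Topt P r γ w‖ ≤ γ * ‖v - w‖ :=
  (pi_norm_le_iff_of_nonneg (mul_nonneg hγ (norm_nonneg _))).2 fun s =>
    Finset.abs_sup'_sub_sup'_le _ fun a _ => abs_qValue_sub_le hP hγ v w s a

theorem norm_Tcomp_sub_le (hP : IsStochastic P) (hγ : 0 ≤ γ) (πs : ℕ → S → A) :
    ∀ (m k : ℕ) (v w : S → ℝ),
      ‖Tcomp P r γ πs k m v - Tcomp P r γ πs k m w‖ ≤ γ ^ m * ‖v - w‖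
  | 0, _, _, _ => by simp [Tcomp]
  | m + 1, k, v, w =>
    calc ‖Tcomp P r γ πs k (m + 1) v - Tcomp P r γ πs k (m + 1) w‖
        ≤ γ * ‖Tcomp P r γ πs (k - 1) m v - Tcomp P r γ πs (k - 1) m w‖ :=
          norm_Tpol_sub_le hP hγ _ _ _
      _ ≤ γ * (γ ^ m * ‖v - w‖) := by gcongr; exact norm_Tcomp_sub_le hP hγ πs m (k - 1) v w
      _ = γ ^ (m + 1) * ‖v - w‖ := by ring

variable [Fintype A] [Nonempty A] in
theorem norm_sub_Tpol_le_of_greedy (hP : IsStochastic P) (hγ : 0 ≤ γ) {π : S → A}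
    {vstar w : S → ℝ} (hstar : Topt P r γ vstar = vstar)
    (hgreedy : Tpol P r γ π w = Topt P r γ w) (u : S → ℝ) :
    ‖vstar - Tpol P r γ π u‖ ≤ γ * ‖vstar - w‖ + γ * ‖w - u‖ := by
  have hsplit : vstar - Tpol P r γ π u
      = (Topt P r γ vstar - Topt P r γ w) + (Tpol P r γ π w - Tpol P r γ π u) := by
    rw [hstar, hgreedy]
    abel
  rw [hsplit]
  exact (norm_add_le _ _).trans
    (add_le_add (norm_Topt_sub_le hP hγ _ _) (norm_Tpol_sub_le hP hγ _ _ _))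

end Contraction

theorem api_growing_period_one_step_general (P : S → A → S → ℝ) (r : S → A → ℝ) (γ : ℝ)
    (hP : IsStochastic P) (hγ0 : 0 < γ)
    (Vmax ε : ℝ)
    (πs : ℕ → S → A) (vkk : ℕ → S → ℝ) (εf : ℕ → S → ℝ)
    (hfix : ∀ k : ℕ, 1 ≤ k → Tcomp P r γ πs k k (vkk k) = vkk k)
    (hgreedy : ∀ k : ℕ, 1 ≤ k →
      Tpol P r γ (πs (k+1)) (vkk k + εf k) = Topt P r γ (vkk k + εf k))
    (herr : ∀ k : ℕ, ‖εf k‖ ≤ ε)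
    (hvb : ∀ k : ℕ, 1 ≤ k → ‖vkk k‖ ≤ Vmax)
    (vstar : S → ℝ) (hstar : Topt P r γ vstar = vstar) :
    ∀ k : ℕ, 1 ≤ k →
      ‖vstar - vkk (k+1)‖ ≤ γ * ‖vstar - vkk k‖ + 2 * γ * ε + 2 * γ ^ (k+1) * Vmax := by
  intro k hk
  set u := Tcomp P r γ πs k k (vkk (k + 1))
  have hperiodic : vkk (k + 1) = Tpol P r γ (πs (k + 1)) u := (hfix (k + 1) (by omega)).symm
  have hu : ‖u - vkk k‖ ≤ γ ^ k * (2 * Vmax) :=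
    calc ‖u - vkk k‖ = ‖u - Tcomp P r γ πs k k (vkk k)‖ := by rw [hfix k hk]
      _ ≤ γ ^ k * ‖vkk (k + 1) - vkk k‖ := norm_Tcomp_sub_le hP hγ0.le πs k k _ _
      _ ≤ γ ^ k * (2 * Vmax) := by
          gcongr
          linarith [norm_sub_le (vkk (k + 1)) (vkk k), hvb k hk, hvb (k + 1) (by omega)]
  have hstep := norm_sub_Tpol_le_of_greedy hP hγ0.le hstar (hgreedy k hk) u
  rw [← hperiodic] at hstep
  have hw : ‖vstar - (vkk k + εf k)‖ ≤ ‖vstar - vkk k‖ + ε := by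
    rw [← sub_sub]
    exact (norm_sub_le _ _).trans (by linarith [herr k])
  have hwu : ‖vkk k + εf k - u‖ ≤ ε + γ ^ k * (2 * Vmax) :=
    calc ‖vkk k + εf k - u‖ = ‖εf k - (u - vkk k)‖ := by congr 1; abel
      _ ≤ ε + γ ^ k * (2 * Vmax) := (norm_sub_le _ _).trans (add_le_add (herr k) hu)
  calc ‖vstar - vkk (k + 1)‖
      ≤ γ * (‖vstar - vkk k‖ + ε) + γ * (ε + γ ^ k * (2 * Vmax)) := by
        refine hstep.trans ?_
        gcongr
    _ = γ * ‖vstar - vkk k‖ + 2 * γ * ε + 2 * γ ^ (k + 1) * Vmax := by ring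

/-- One-step error propagation for API with growing period:
`‖v_* − v_{π_{k+1,k+1}}‖ ≤ γ ‖v_* − v_{π_{k,k}}‖ + 2γε + 2γ^{k+1} V_max`. -/
theorem api_growing_period_one_step (P : S → A → S → ℝ) (r : S → A → ℝ) (γ : ℝ)
    (hP : IsStochastic P) (hγ0 : 0 < γ) (hγ1 : γ < 1)
    (Rmax Vmax ε : ℝ) (hr : ∀ s a, |r s a| ≤ Rmax) (hV : Vmax = Rmax / (1 - γ))
    (πs : ℕ → S → A) (vkk : ℕ → S → ℝ) (εf : ℕ → S → ℝ)
    (hfix : ∀ k : ℕ, 1 ≤ k → Tcomp P r γ πs k k (vkk k) = vkk k)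
    (hgreedy : ∀ k : ℕ, 1 ≤ k →
      Tpol P r γ (πs (k+1)) (vkk k + εf k) = Topt P r γ (vkk k + εf k))
    (herr : ∀ k : ℕ, ‖εf k‖ ≤ ε) (hε : 0 ≤ ε)
    (hvb : ∀ k : ℕ, 1 ≤ k → ‖vkk k‖ ≤ Vmax)
    (vstar : S → ℝ) (hstar : Topt P r γ vstar = vstar) (hstarb : ‖vstar‖ ≤ Vmax) :
    ∀ k : ℕ, 1 ≤ k →
      ‖vstar - vkk (k+1)‖ ≤ γ * ‖vstar - vkk k‖ + 2 * γ * ε + 2 * γ ^ (k+1) * Vmax :=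
  api_growing_period_one_step_general P r γ hP hγ0 Vmax ε πs vkk εf hfix hgreedy herr hvb vstar
    hstar
end
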